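/- Existence of a blocking triplet under misestimated preferences: let U and V be two utility matrices Fin N → Fin N → ℝ, both with injective rows. Suppose the permutation σ of Fin N is a core matching of the housing market with preferences V, but is not a core matching of the housing market with true preferences U. Then there exist a player i and a house k such that U i k > U i (σ i) while V i (σ i) > V i k (player i truly prefers k to their assigned house σ i, yet ranks σ i above k under the submitted preferences V). -/
import Mathlib


/-- A nonempty coalition `S` blocks the matching `σ` with respect to the utility
matrix `W`: the coalition can redistribute its own endowed houses via `τ`
(mapping `S` into `S`, injectively on `S`) so that every member is strictly better off. -/
def Blocks {N : ℕ} (W : Fin N → Fin N → ℝ) (σ : Fin N → Fin N) (S : Set (Fin N)) : Prop :=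
  S.Nonempty ∧ ∃ τ : Fin N → Fin N, Set.MapsTo τ S S ∧ Set.InjOn τ S ∧
    ∀ i ∈ S, W i (σ i) < W i (τ i)

/-- A matching is a core matching with respect to `W` if no nonempty coalition
blocks it with respect to `W`. -/
def IsCoreMatching {N : ℕ} (W : Fin N → Fin N → ℝ) (σ : Fin N → Fin N) : Prop :=
  ∀ S : Set (Fin N), ¬ Blocks W σ S

/-- Existence of a blocking triplet under misestimated preferences: if the
permutation `σ` is a core matching for the submitted preferences `V` but not for
the true preferences `U` (both with injective rows), then some player `i` truly
prefers some house `k` to the assigned house `σ i` while ranking `σ i` above `k`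
under `V`. -/
theorem blocking_triplet_exists {N : ℕ}
    (U V : Fin N → Fin N → ℝ)
    (hU : ∀ i, Function.Injective (U i)) (hV : ∀ i, Function.Injective (V i))
    (σ : Equiv.Perm (Fin N))
    (hVcore : IsCoreMatching V ⇑σ) (hUnot : ¬ IsCoreMatching U ⇑σ) :
    ∃ i k : Fin N, U i (σ i) < U i k ∧ V i k < V i (σ i) := by
  by_contra h
  push_neg at h
  apply hUnot
  intro S hS
  obtain ⟨hne, τ, hmaps, hinj, himp⟩ := hS
  apply hVcore S
  refine ⟨hne, τ, hmaps, hinj, fun i hi => ?_⟩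
  have hU' := himp i hi
  have hle := h i (τ i) hU'
  have hne' : τ i ≠ σ i := fun e => by rw [e] at hU'; exact lt_irrefl _ hU'
  exact lt_of_le_of_ne hle fun e => hne' (hV i e.symm)
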